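/- In Matching Pennies — the two-player game with A = B = {Heads, Tails}, u1(Heads,Heads) = u1(Tails,Tails) = 1, u1(Heads,Tails) = u1(Tails,Heads) = −1, and u2 = −u1 — the leader's value of every pure commitment (a1, P), with P : A × B → ℝ≥0 an arbitrary payment function, is at most −1, while the profile in which both players mix uniformly is a Nash equilibrium giving both players expected utility 0. Hence the leader's optimal value over pure commitments with payments is strictly below her utility in the worst Nash equilibrium of the base game. -/

import Mathlib

open Finset

noncomputable section

/-- A probability distribution on a finite type, given as a weight function. -/
def IsDist {X : Type*} [Fintype X] (σ : X → ℝ) : Prop :=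
  (∀ x, 0 ≤ σ x) ∧ ∑ x, σ x = 1

/-- The point mass at `x0`. -/
def delta {X : Type*} [DecidableEq X] (x0 : X) : X → ℝ :=
  fun x => if x = x0 then 1 else 0

/-- Follower's induced utility under commitment `(σ, P)` when playing `b`. -/
def folU {A B : Type*} [Fintype A] (u2 : A → B → ℝ) (σ : A → ℝ) (P : A → B → ℝ) (b : B) : ℝ :=
  ∑ a, σ a * (u2 a b + P a b)

/-- Leader's utility under commitment `(σ, P)` when the follower plays `b`. -/
def leadU {A B : Type*} [Fintype A] (u1 : A → B → ℝ) (σ : A → ℝ) (P : A → B → ℝ) (b : B) : ℝ :=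
  ∑ a, σ a * (u1 a b - P a b)

/-- The leader's value of the commitment `(σ, P)`: the follower plays an action maximizing
his induced utility, tiebreaking in favor of the leader. -/
def leaderValue {A B : Type*} [Fintype A] [Fintype B] (u1 u2 : A → B → ℝ)
    (σ : A → ℝ) (P : A → B → ℝ) : ℝ :=
  sSup {x | ∃ b : B, (∀ b' : B, folU u2 σ P b' ≤ folU u2 σ P b) ∧ x = leadU u1 σ P b}

/-- Nash equilibrium of a finite two-player game. -/
def NashEq {A B : Type*} [Fintype A] [Fintype B] (u1 u2 : A → B → ℝ)
    (σ1 : A → ℝ) (σ2 : B → ℝ) : Prop :=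
  IsDist σ1 ∧ IsDist σ2 ∧
  (∀ a : A, 0 < σ1 a → ∀ a' : A, ∑ b, σ2 b * u1 a' b ≤ ∑ b, σ2 b * u1 a b) ∧
  (∀ b : B, 0 < σ2 b → ∀ b' : B, ∑ a, σ1 a * u2 a b' ≤ ∑ a, σ1 a * u2 a b)

/-- The actions in Matching Pennies. -/
inductive Coin | Heads | Tails
  deriving DecidableEq

instance : Fintype Coin :=
  ⟨{Coin.Heads, Coin.Tails}, fun x => by cases x <;> simp⟩

/-- Leader's utility in Matching Pennies. -/
def mp1 : Coin → Coin → ℝ := fun a b => if a = b then 1 else -1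

/-- Follower's utility in Matching Pennies. -/
def mp2 : Coin → Coin → ℝ := fun a b => -(mp1 a b)

/-! In a zero-sum game the leader's utility against a best response is minus the follower's
induced utility, and since payments are nonnegative that is at least the follower's unpaid
utility for any action `b'`; against a pure commitment in Matching Pennies the mismatching `b'`
gives him `1`. In a Nash equilibrium, on the other hand, the leader earns at least what either
pure deviation would, and the two deviations earn opposite amounts against every `σ2`, so every
equilibrium value is nonnegative. -/

theorem sum_delta_mul {X : Type*} [Fintype X] [DecidableEq X] (x0 : X) (g : X → ℝ) :
    ∑ x, delta x0 x * g x = g x0 := by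
  simp [delta]

theorem delta_nonneg {X : Type*} [DecidableEq X] (x0 x : X) : 0 ≤ delta x0 x := by
  unfold delta
  split_ifs <;> norm_num

section Commitment

variable {A B : Type*} [Fintype A] {u1 u2 : A → B → ℝ} {σ : A → ℝ}
  {P : A → B → ℝ}

theorem leaderValue_le [Fintype B] [Nonempty B] {c : ℝ}
    (h : ∀ b, (∀ b', folU u2 σ P b' ≤ folU u2 σ P b) → leadU u1 σ P b ≤ c) :
    leaderValue u1 u2 σ P ≤ c := by
  obtain ⟨b, hb⟩ := Finite.exists_max (folU u2 σ P)
  refine csSup_le ⟨_, b, hb, rfl⟩ ?_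
  rintro x ⟨b, hb, rfl⟩
  exact h b hb

theorem leadU_eq_neg_folU (hzs : ∀ a b, u2 a b = -u1 a b) (b : B) :
    leadU u1 σ P b = -folU u2 σ P b := by
  simp only [leadU, folU, hzs, ← sum_neg_distrib]
  exact sum_congr rfl fun a _ => by ring

theorem leaderValue_le_neg_of_zeroSum [Fintype B] (hzs : ∀ a b, u2 a b = -u1 a b) (hσ : ∀ a, 0 ≤ σ a)
    (hP : ∀ a b, 0 ≤ P a b) (b' : B) :
    leaderValue u1 u2 σ P ≤ -∑ a, σ a * u2 a b' := by
  have : Nonempty B := ⟨b'⟩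
  have hpaid : ∑ a, σ a * u2 a b' ≤ folU u2 σ P b' :=
    sum_le_sum fun a _ => mul_le_mul_of_nonneg_left (le_add_of_nonneg_right (hP a b')) (hσ a)
  refine leaderValue_le fun b hb => ?_
  rw [leadU_eq_neg_folU hzs]
  linarith [hb b']

end Commitment

theorem NashEq.deviation_le_value {A B : Type*} [Fintype A] [Fintype B] {u1 u2 : A → B → ℝ}
    {σ1 : A → ℝ} {σ2 : B → ℝ} (h : NashEq u1 u2 σ1 σ2) (a' : A) :
    ∑ b, σ2 b * u1 a' b ≤ ∑ a, ∑ b, σ1 a * σ2 b * u1 a b := by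
  obtain ⟨⟨hσ1, hsum⟩, -, hbest, -⟩ := h
  calc ∑ b, σ2 b * u1 a' b = ∑ a, σ1 a * ∑ b, σ2 b * u1 a' b := by rw [← sum_mul, hsum, one_mul]
    _ ≤ ∑ a, σ1 a * ∑ b, σ2 b * u1 a b := by
      refine sum_le_sum fun a _ => ?_
      rcases (hσ1 a).eq_or_lt with h0 | hpos
      · simp [← h0]
      · exact mul_le_mul_of_nonneg_left (hbest a hpos a') hpos.le
    _ = ∑ a, ∑ b, σ1 a * σ2 b * u1 a b := by simp only [mul_sum, mul_assoc]

theorem Coin.sum_univ {M : Type*} [AddCommMonoid M] (f : Coin → M) :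
    ∑ x, f x = f Coin.Heads + f Coin.Tails := by
  rw [show (univ : Finset Coin) = {Coin.Heads, Coin.Tails} from rfl, sum_pair (by decide)]

theorem exists_mp2_eq_one (a : Coin) : ∃ b, mp2 a b = 1 := by
  cases a
  · exact ⟨Coin.Tails, by simp [mp2, mp1]⟩
  · exact ⟨Coin.Heads, by simp [mp2, mp1]⟩

theorem mp1_heads_add_mp1_tails (b : Coin) : mp1 Coin.Heads b + mp1 Coin.Tails b = 0 := by
  cases b <;> simp [mp1]

theorem sum_mp1_left (a : Coin) : ∑ b, mp1 a b = 0 := by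
  cases a <;> simp [Coin.sum_univ, mp1]

theorem sum_mp1_right (b : Coin) : ∑ a, mp1 a b = 0 := by
  simpa [Coin.sum_univ] using mp1_heads_add_mp1_tails b

theorem mp_pure_leaderValue_le (a1 : Coin) (P : Coin → Coin → ℝ) (hP : ∀ a b, 0 ≤ P a b) :
    leaderValue mp1 mp2 (delta a1) P ≤ -1 := by
  obtain ⟨b, hb⟩ := exists_mp2_eq_one a1
  have hzs : ∀ a b, mp2 a b = -mp1 a b := fun _ _ => rfl
  have := leaderValue_le_neg_of_zeroSum hzs (delta_nonneg a1) hP b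
  rwa [sum_delta_mul, hb] at this

theorem mp_nash_value_nonneg {σ1 σ2 : Coin → ℝ} (h : NashEq mp1 mp2 σ1 σ2) :
    0 ≤ ∑ a, ∑ b, σ1 a * σ2 b * mp1 a b := by
  have hcancel : ∑ b, σ2 b * mp1 Coin.Heads b + ∑ b, σ2 b * mp1 Coin.Tails b = 0 := by
    simp [← sum_add_distrib, ← mul_add, mp1_heads_add_mp1_tails]
  linarith [h.deviation_le_value Coin.Heads, h.deviation_le_value Coin.Tails]

theorem mp_uniform_nashEq : NashEq mp1 mp2 (fun _ => 1/2) (fun _ => 1/2) := by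
  have hdist : IsDist (fun _ : Coin => (1/2 : ℝ)) := ⟨fun _ => by norm_num, by rw [Coin.sum_univ]; norm_num⟩
  refine ⟨hdist, hdist, fun _ _ a' => ?_, fun _ _ b' => ?_⟩
  · simp [← mul_sum, sum_mp1_left]
  · simp [mp2, ← mul_sum, sum_mp1_right]

theorem stmt6 :
    (∀ (a1 : Coin) (P : Coin → Coin → ℝ), (∀ a b, 0 ≤ P a b) →
        leaderValue mp1 mp2 (delta a1) P ≤ -1)
    ∧ NashEq mp1 mp2 (fun _ => 1/2) (fun _ => 1/2)
    ∧ (∑ a, ∑ b, (1/2 : ℝ) * (1/2 : ℝ) * mp1 a b) = 0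
    ∧ (∑ a, ∑ b, (1/2 : ℝ) * (1/2 : ℝ) * mp2 a b) = 0
    ∧ sSup {x | ∃ (a1 : Coin) (P : Coin → Coin → ℝ), (∀ a b, 0 ≤ P a b) ∧
          x = leaderValue mp1 mp2 (delta a1) P}
        < sInf {x | ∃ (σ1 σ2 : Coin → ℝ), NashEq mp1 mp2 σ1 σ2 ∧
            x = ∑ a, ∑ b, σ1 a * σ2 b * mp1 a b} := by
  refine ⟨mp_pure_leaderValue_le, mp_uniform_nashEq, ?_, ?_, ?_⟩
  · simp [← mul_sum, sum_mp1_left]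
  · simp [mp2, ← mul_sum, sum_mp1_left]
  · have hcommit : sSup {x | ∃ (a1 : Coin) (P : Coin → Coin → ℝ), (∀ a b, 0 ≤ P a b) ∧
        x = leaderValue mp1 mp2 (delta a1) P} ≤ -1 := by
      refine csSup_le ⟨_, Coin.Heads, 0, fun _ _ => le_rfl, rfl⟩ ?_
      rintro x ⟨a1, P, hP, rfl⟩
      exact mp_pure_leaderValue_le a1 P hP
    have hnash : 0 ≤ sInf {x | ∃ (σ1 σ2 : Coin → ℝ), NashEq mp1 mp2 σ1 σ2 ∧
        x = ∑ a, ∑ b, σ1 a * σ2 b * mp1 a b} := by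
      refine le_csInf ⟨_, _, _, mp_uniform_nashEq, rfl⟩ ?_
      rintro x ⟨σ1, σ2, hN, rfl⟩
      exact mp_nash_value_nonneg hN
    linarith
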